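/- Let R be a commutative ℚ-algebra, σ a type, and D = (σ →₀ ℕ) the additive monoid of finitely supported functions. Let F : D → R satisfy F(0) = 0, and for each μ ∈ D define Z(μ) = ∑_Λ (∏_{ν ∈ Λ} F(ν)) / |Aut Λ|, where the (finite) sum is over all finite multisets Λ of nonzero elements of D whose sum is μ, and |Aut Λ| = ∏_ν (mult_Λ(ν))!. Then for every nonzero μ ∈ D one has F(μ) = ∑_Λ θ(Λ) · ∏_{ν ∈ Λ} Z(ν), the sum again over all finite multisets Λ of nonzero elements of D with sum μ, where θ(Λ) = (−1)^{ℓ(Λ)−1}·(ℓ(Λ)−1)! / |Aut Λ| and ℓ(Λ) is the cardinality of Λ. -/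

import Mathlib

/-!
Write `deg` for the total degree on `σ →₀ ℕ`. Applying the Euler operator `deg` to `Z = exp F`
gives, coefficientwise, `deg μ · Z μ = ∑_{ν + κ = μ} deg ν · F ν · Z κ`; since `Z 0 = 1` and `deg μ`
is invertible in a `ℚ`-algebra, this recursion determines `F μ` from `Z` by well-founded induction
on `μ`. The `θ`-sum satisfies the same recursion: splitting off one part `ρ` of each vector
partition `M` and using `θ (M.erase ρ) = - mult_M ρ · θ M / (ℓ M - 1)`, the coefficient of
`∏_{ν ∈ M} Z ν` collapses to `deg μ` for `M = {μ}` and to `0` whenever `ℓ M ≥ 2`.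
-/

/-- `|Aut Λ| = ∏_ν (mult_Λ ν)!` for a finite multiset `Λ`, as a rational number. -/
noncomputable def lmovAut {α : Type*} (S : Multiset α) : ℚ :=
  letI := Classical.decEq α
  ∏ a ∈ S.toFinset, (Nat.factorial (S.count a) : ℚ)

/-- `θ(Λ) = (−1)^{ℓ(Λ)−1} (ℓ(Λ)−1)! / |Aut Λ|`. -/
noncomputable def lmovTheta {α : Type*} (S : Multiset α) : ℚ :=
  (-1) ^ (Multiset.card S - 1) * (Nat.factorial (Multiset.card S - 1) : ℚ) / lmovAut S

open Finset

section Multiplicities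

variable {α : Type*}

theorem lmovAut_eq_prod_of_subset [DecidableEq α] {S : Multiset α} {s : Finset α}
    (h : S.toFinset ⊆ s) :
    lmovAut S = ∏ a ∈ s, ((S.count a).factorial : ℚ) := by
  rw [lmovAut, Subsingleton.elim (Classical.decEq α) ‹_›]
  refine prod_subset h fun a _ ha => ?_
  rw [Multiset.count_eq_zero_of_notMem (by simpa using ha), Nat.factorial_zero, Nat.cast_one]

theorem lmovAut_pos (S : Multiset α) : 0 < lmovAut S := by
  classical
  rw [lmovAut_eq_prod_of_subset subset_rfl]
  exact prod_pos fun a _ => by positivity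

@[simp]
theorem lmovAut_zero : lmovAut (0 : Multiset α) = 1 := by
  classical
  simp [lmovAut_eq_prod_of_subset (subset_refl _)]

theorem lmovAut_eq_count_mul_erase [DecidableEq α] {S : Multiset α} {a : α} (h : a ∈ S) :
    lmovAut S = S.count a * lmovAut (S.erase a) := by
  have ha : a ∈ S.toFinset := Multiset.mem_toFinset.2 h
  have hsub : (S.erase a).toFinset ⊆ S.toFinset := Multiset.toFinset_subset.2 (S.erase_subset a)
  rw [lmovAut_eq_prod_of_subset subset_rfl, lmovAut_eq_prod_of_subset hsub,
    ← mul_prod_erase _ _ ha, ← mul_prod_erase _ _ ha, Multiset.count_erase_self,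
    ← mul_assoc, ← Nat.cast_mul, Nat.mul_factorial_pred (Multiset.count_ne_zero.2 h)]
  congr 1
  refine prod_congr rfl fun b hb => ?_
  rw [Multiset.count_erase_of_ne (ne_of_mem_erase hb)]

theorem sum_div_lmovAut_erase [DecidableEq α] (w : α → ℚ) (S : Multiset α) :
    ∑ a ∈ S.toFinset, w a / lmovAut (S.erase a) = (S.map w).sum / lmovAut S := by
  rw [sum_multiset_map_count, sum_div]
  refine sum_congr rfl fun a ha => ?_
  have hS := (lmovAut_pos (S.erase a)).ne'
  have hc : (S.count a : ℚ) ≠ 0 := by simpa using Multiset.mem_toFinset.1 ha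
  rw [lmovAut_eq_count_mul_erase (Multiset.mem_toFinset.1 ha), nsmul_eq_mul]
  field_simp

theorem lmovTheta_singleton (a : α) : lmovTheta ({a} : Multiset α) = 1 := by
  classical
  simp [lmovTheta, lmovAut_eq_prod_of_subset (subset_refl _)]

theorem lmovTheta_erase [DecidableEq α] {S : Multiset α} {a : α} {n : ℕ} (h : a ∈ S)
    (hS : Multiset.card S = n + 2) :
    (n + 1 : ℚ) * lmovTheta (S.erase a) = -S.count a * lmovTheta S := by
  have hE := (lmovAut_pos (S.erase a)).ne'
  have hc : (S.count a : ℚ) ≠ 0 := by simpa using h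
  rw [lmovTheta, lmovTheta, Multiset.card_erase_of_mem h, hS, lmovAut_eq_count_mul_erase h]
  simp only [Nat.pred_eq_sub_one, show n + 2 - 1 = n + 1 from rfl, Nat.add_sub_cancel,
    Nat.factorial_succ, pow_succ]
  push_cast
  field_simp

theorem sum_map_mul_lmovTheta_add_sum_erase_eq_zero [DecidableEq α] (w : α → ℚ) {S : Multiset α}
    (hS : 2 ≤ Multiset.card S) :
    (S.map w).sum * lmovTheta S
      + ∑ a ∈ S.toFinset, ((S.erase a).map w).sum * lmovTheta (S.erase a) = 0 := by
  obtain ⟨n, hn⟩ : ∃ n, Multiset.card S = n + 2 := ⟨_, (Nat.sub_add_cancel hS).symm⟩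
  have hcount : ∑ a ∈ S.toFinset, (S.count a : ℚ) = n + 2 := by
    exact_mod_cast (Multiset.toFinset_sum_count_eq S).trans hn
  have hweight : ∑ a ∈ S.toFinset, (S.count a : ℚ) * w a = (S.map w).sum := by
    simp [sum_multiset_map_count]
  have herase : ∀ a ∈ S.toFinset, (n + 1 : ℚ) * (((S.erase a).map w).sum * lmovTheta (S.erase a))
      = -lmovTheta S * ((S.map w).sum * S.count a - S.count a * w a) := by
    intro a ha
    have h := Multiset.mem_toFinset.1 ha
    rw [mul_left_comm, lmovTheta_erase h hn, ← Multiset.sum_map_erase h]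
    ring
  have key : (n + 1 : ℚ) * ∑ a ∈ S.toFinset, ((S.erase a).map w).sum * lmovTheta (S.erase a)
      = -(n + 1 : ℚ) * ((S.map w).sum * lmovTheta S) := by
    rw [mul_sum, sum_congr rfl herase, ← mul_sum, sum_sub_distrib, ← mul_sum, hcount, hweight]
    ring
  refine mul_left_cancel₀ (by positivity : (n + 1 : ℚ) ≠ 0) ?_
  linear_combination key

end Multiplicities

namespace Finsupp

variable {σ : Type*}

theorem card_le_degree_sum {Λ : Multiset (σ →₀ ℕ)} (h : (0 : σ →₀ ℕ) ∉ Λ) :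
    Multiset.card Λ ≤ degree Λ.sum := by
  have hpos : ∀ n ∈ Λ.map degree, 1 ≤ n := by
    simp only [Multiset.mem_map]
    rintro _ ⟨ν, hν, rfl⟩
    exact Nat.one_le_iff_ne_zero.2 ((degree_eq_zero_iff ν).not.2 (ne_of_mem_of_not_mem hν h))
  simpa [map_multiset_sum] using Multiset.card_nsmul_le_sum hpos

theorem finite_setOf_vectorPartitions (μ : σ →₀ ℕ) :
    {Λ : Multiset (σ →₀ ℕ) | Λ.sum = μ ∧ (0 : σ →₀ ℕ) ∉ Λ}.Finite := by
  classical
  refine (degree μ • (Iic μ).val).powerset.toFinset.finite_toSet.subset ?_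
  rintro Λ ⟨rfl, h0⟩
  rw [mem_coe, Multiset.mem_toFinset, Multiset.mem_powerset, Multiset.le_iff_count]
  intro ν
  by_cases hν : ν ∈ Λ
  · rw [Multiset.count_nsmul, Multiset.count_eq_one_of_mem (Iic _).nodup
      (mem_Iic.2 (Multiset.le_sum_of_mem hν)), mul_one]
    exact (Multiset.count_le_card ν Λ).trans (card_le_degree_sum h0)
  · simp [Multiset.count_eq_zero_of_notMem hν]

noncomputable def vectorPartitions (μ : σ →₀ ℕ) : Finset (Multiset (σ →₀ ℕ)) :=
  (finite_setOf_vectorPartitions μ).toFinset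

@[simp]
theorem mem_vectorPartitions {μ : σ →₀ ℕ} {Λ : Multiset (σ →₀ ℕ)} :
    Λ ∈ vectorPartitions μ ↔ Λ.sum = μ ∧ (0 : σ →₀ ℕ) ∉ Λ := by
  simp [vectorPartitions]

theorem finsum_mem_eq_sum_vectorPartitions {M : Type*} [AddCommMonoid M]
    (g : Multiset (σ →₀ ℕ) → M) (μ : σ →₀ ℕ) :
    ∑ᶠ Λ ∈ {Λ : Multiset (σ →₀ ℕ) | Λ.sum = μ ∧ (0 : σ →₀ ℕ) ∉ Λ}, g Λ
      = ∑ Λ ∈ vectorPartitions μ, g Λ := by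
  rw [← (finite_setOf_vectorPartitions μ).coe_toFinset, finsum_mem_coe_finset]
  rfl

theorem vectorPartitions_zero : vectorPartitions (0 : σ →₀ ℕ) = {0} := by
  ext Λ
  simp only [mem_vectorPartitions, Multiset.sum_eq_zero_iff, mem_singleton]
  constructor
  · rintro ⟨h, h0⟩
    exact Multiset.eq_zero_of_forall_notMem fun ν hν => h0 (h ν hν ▸ hν)
  · rintro rfl
    simp

theorem singleton_mem_vectorPartitions {μ : σ →₀ ℕ} (hμ : μ ≠ 0) :
    {μ} ∈ vectorPartitions μ := by
  simpa using hμ.symm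

theorem sum_antidiagonal_erase_sum_vectorPartitions [DecidableEq σ] {M : Type*} [AddCommMonoid M]
    (μ : σ →₀ ℕ) (g : (σ →₀ ℕ) → Multiset (σ →₀ ℕ) → M) :
    ∑ p ∈ (antidiagonal μ).erase (0, μ), ∑ Λ ∈ vectorPartitions p.2, g p.1 Λ
      = ∑ Λ ∈ vectorPartitions μ, ∑ ν ∈ Λ.toFinset, g ν (Λ.erase ν) := by
  rw [sum_sigma', sum_sigma']
  refine sum_nbij' (fun x => ⟨x.1.1 ::ₘ x.2, x.1.1⟩)
    (fun y => ⟨(y.2, (y.1.erase y.2).sum), y.1.erase y.2⟩) ?_ ?_ ?_ ?_ ?_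
  · rintro ⟨⟨ν, κ⟩, Λ⟩ hx
    simp only [mem_sigma, mem_erase, HasAntidiagonal.mem_antidiagonal,
      mem_vectorPartitions] at hx ⊢
    obtain ⟨⟨hne, hsum⟩, rfl, h0⟩ := hx
    have hν : ν ≠ 0 := by rintro rfl; exact hne (by rw [← hsum, zero_add])
    refine ⟨⟨by rw [Multiset.sum_cons, hsum], ?_⟩,
      Multiset.mem_toFinset.2 (Multiset.mem_cons_self ν Λ)⟩
    rw [Multiset.mem_cons, not_or]
    exact ⟨hν.symm, h0⟩
  · rintro ⟨Λ, ν⟩ hy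
    simp only [mem_sigma, mem_erase, HasAntidiagonal.mem_antidiagonal, mem_vectorPartitions,
      Multiset.mem_toFinset] at hy ⊢
    obtain ⟨⟨rfl, h0⟩, hν⟩ := hy
    refine ⟨⟨fun h => h0 ((Prod.mk.inj h).1 ▸ hν), ?_⟩, trivial,
      fun h => h0 (Multiset.mem_of_mem_erase h)⟩
    · rw [← Multiset.sum_cons, Multiset.cons_erase hν]
  · rintro ⟨⟨ν, κ⟩, Λ⟩ hx
    simp only [mem_sigma, mem_erase, HasAntidiagonal.mem_antidiagonal, mem_vectorPartitions] at hx ⊢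
    simp [hx.2.1]
  · rintro ⟨Λ, ν⟩ hy
    simp only [mem_sigma, Multiset.mem_toFinset] at hy
    simp [Multiset.cons_erase hy.2]
  · intro _ _
    simp

theorem natCast_degree_multiset_sum {S : Type*} [AddCommMonoidWithOne S]
    (Λ : Multiset (σ →₀ ℕ)) : (Λ.sum.degree : S) = (Λ.map fun ν => (ν.degree : S)).sum := by
  rw [map_multiset_sum, Nat.cast_multiset_sum, Multiset.map_map]
  rfl

theorem two_le_card_of_mem_vectorPartitions {μ : σ →₀ ℕ} {Λ : Multiset (σ →₀ ℕ)}
    (hΛ : Λ ∈ vectorPartitions μ) (hμ : μ ≠ 0) (hne : Λ ≠ {μ}) : 2 ≤ Multiset.card Λ := by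
  rw [mem_vectorPartitions] at hΛ
  by_contra! hlt
  interval_cases hc : Multiset.card Λ
  · exact hμ (by rw [← hΛ.1, Multiset.card_eq_zero.1 hc, Multiset.sum_zero])
  · obtain ⟨ν, rfl⟩ := Multiset.card_eq_one.1 hc
    exact hne (by rw [← hΛ.1, Multiset.sum_singleton])

end Finsupp

section ExpLog

open Finsupp

variable {R : Type*} [CommRing R] [Algebra ℚ R] {σ : Type*}

/-- The coefficient of `p^μ` in `exp (∑ ν, F ν p^ν)`. -/
noncomputable def partitionExp (F : (σ →₀ ℕ) → R) (μ : σ →₀ ℕ) : R :=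
  ∑ Λ ∈ vectorPartitions μ, algebraMap ℚ R (1 / lmovAut Λ) * (Λ.map F).prod

/-- The coefficient of `p^μ` in `log (1 + ∑ ν ≠ 0, Z ν p^ν)`. -/
noncomputable def partitionLog (Z : (σ →₀ ℕ) → R) (μ : σ →₀ ℕ) : R :=
  ∑ Λ ∈ vectorPartitions μ, algebraMap ℚ R (lmovTheta Λ) * (Λ.map Z).prod

theorem partitionExp_zero (F : (σ →₀ ℕ) → R) : partitionExp F 0 = 1 := by
  simp [partitionExp, vectorPartitions_zero]

variable [DecidableEq σ]

theorem natCast_degree_sum_mul_eq_sum_erase (F : (σ →₀ ℕ) → R) (Λ : Multiset (σ →₀ ℕ)) :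
    (Λ.sum.degree : R) * (algebraMap ℚ R (1 / lmovAut Λ) * (Λ.map F).prod)
      = ∑ ν ∈ Λ.toFinset, (ν.degree : R) * F ν
          * (algebraMap ℚ R (1 / lmovAut (Λ.erase ν)) * ((Λ.erase ν).map F).prod) := by
  have h := sum_div_lmovAut_erase (fun ν => (ν.degree : ℚ)) Λ
  rw [← natCast_degree_multiset_sum] at h
  calc (Λ.sum.degree : R) * (algebraMap ℚ R (1 / lmovAut Λ) * (Λ.map F).prod)
      = algebraMap ℚ R (Λ.sum.degree / lmovAut Λ) * (Λ.map F).prod := by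
        rw [← map_natCast (algebraMap ℚ R), ← mul_assoc, ← map_mul, mul_one_div]
    _ = ∑ ν ∈ Λ.toFinset, algebraMap ℚ R (ν.degree / lmovAut (Λ.erase ν)) * (Λ.map F).prod := by
        rw [← h, map_sum, Finset.sum_mul]
    _ = _ := sum_congr rfl fun ν hν => by
        rw [← Multiset.prod_map_erase (Multiset.mem_toFinset.1 hν), ← map_natCast (algebraMap ℚ R),
          div_eq_mul_one_div, map_mul]
        ring

theorem degree_mul_partitionExp (F : (σ →₀ ℕ) → R) (μ : σ →₀ ℕ) :
    (μ.degree : R) * partitionExp F μ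
      = ∑ p ∈ antidiagonal μ, (p.1.degree : R) * F p.1 * partitionExp F p.2 := by
  calc (μ.degree : R) * partitionExp F μ
      = ∑ Λ ∈ vectorPartitions μ, ∑ ν ∈ Λ.toFinset, (ν.degree : R) * F ν
          * (algebraMap ℚ R (1 / lmovAut (Λ.erase ν)) * ((Λ.erase ν).map F).prod) := by
        rw [partitionExp, Finset.mul_sum]
        refine sum_congr rfl fun Λ hΛ => ?_
        rw [← (mem_vectorPartitions.1 hΛ).1, natCast_degree_sum_mul_eq_sum_erase]
    _ = ∑ p ∈ (antidiagonal μ).erase (0, μ), ∑ Λ ∈ vectorPartitions p.2, (p.1.degree : R) * F p.1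
          * (algebraMap ℚ R (1 / lmovAut Λ) * (Λ.map F).prod) :=
        (sum_antidiagonal_erase_sum_vectorPartitions μ fun ν Λ =>
          (ν.degree : R) * F ν * (algebraMap ℚ R (1 / lmovAut Λ) * (Λ.map F).prod)).symm
    _ = ∑ p ∈ (antidiagonal μ).erase (0, μ), (p.1.degree : R) * F p.1 * partitionExp F p.2 := by
        simp only [partitionExp, Finset.mul_sum]
    _ = _ := sum_erase _ (by simp)

theorem degree_mul_eq_sum_antidiagonal_partitionLog (Z : (σ →₀ ℕ) → R) (hZ0 : Z 0 = 1)
    {μ : σ →₀ ℕ} (hμ : μ ≠ 0) :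
    (μ.degree : R) * Z μ
      = ∑ p ∈ antidiagonal μ, (p.1.degree : R) * partitionLog Z p.1 * Z p.2 := by
  have hcoeff : ∀ M ∈ vectorPartitions μ, M ≠ {μ} → (μ.degree : ℚ) * lmovTheta M
      + ∑ ν ∈ M.toFinset, ((M.erase ν).sum.degree : ℚ) * lmovTheta (M.erase ν) = 0 := by
    intro M hM hne
    have h := sum_map_mul_lmovTheta_add_sum_erase_eq_zero (fun ν => (ν.degree : ℚ))
      (two_le_card_of_mem_vectorPartitions hM hμ hne)
    simpa only [← natCast_degree_multiset_sum, (mem_vectorPartitions.1 hM).1] using h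
  symm
  calc ∑ p ∈ antidiagonal μ, (p.1.degree : R) * partitionLog Z p.1 * Z p.2
      = (μ.degree : R) * partitionLog Z μ
          + ∑ p ∈ (antidiagonal μ).erase (0, μ), ∑ Λ ∈ vectorPartitions p.2,
              algebraMap ℚ R (Λ.sum.degree * lmovTheta Λ) * (Λ.map Z).prod * Z p.1 := by
        rw [sum_antidiagonal_swap μ fun a b => (a.degree : R) * partitionLog Z a * Z b,
          ← Finset.add_sum_erase _ _ (by simp : ((0, μ) : _) ∈ antidiagonal μ),
          hZ0, mul_one]
        congr 1
        refine sum_congr rfl fun p _ => ?_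
        rw [partitionLog, Finset.mul_sum, Finset.sum_mul]
        refine sum_congr rfl fun Λ hΛ => ?_
        rw [(mem_vectorPartitions.1 hΛ).1, map_mul, map_natCast]
        ring
    _ = ∑ M ∈ vectorPartitions μ, algebraMap ℚ R ((μ.degree : ℚ) * lmovTheta M
          + ∑ ν ∈ M.toFinset, ((M.erase ν).sum.degree : ℚ) * lmovTheta (M.erase ν))
          * (M.map Z).prod := by
        rw [sum_antidiagonal_erase_sum_vectorPartitions μ fun ν Λ =>
          algebraMap ℚ R (Λ.sum.degree * lmovTheta Λ) * (Λ.map Z).prod * Z ν,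
          partitionLog, Finset.mul_sum, ← sum_add_distrib]
        refine sum_congr rfl fun M _ => ?_
        rw [map_add, map_sum, add_mul, Finset.sum_mul, map_mul, map_natCast, mul_assoc]
        congr 1
        refine sum_congr rfl fun ν hν => ?_
        rw [mul_assoc, mul_comm _ (Z ν), Multiset.prod_map_erase (Multiset.mem_toFinset.1 hν)]
    _ = (μ.degree : R) * Z μ := by
        rw [sum_eq_single_of_mem _ (singleton_mem_vectorPartitions hμ) fun M hM hne => by
          rw [hcoeff M hM hne, map_zero, zero_mul]]
        simp [lmovTheta_singleton]

theorem eq_of_degree_mul_eq_sum_antidiagonal {Z G H : (σ →₀ ℕ) → R} (hZ0 : Z 0 = 1)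
    (hG : ∀ μ, μ ≠ 0 →
      (μ.degree : R) * Z μ = ∑ p ∈ antidiagonal μ, (p.1.degree : R) * G p.1 * Z p.2)
    (hH : ∀ μ, μ ≠ 0 →
      (μ.degree : R) * Z μ = ∑ p ∈ antidiagonal μ, (p.1.degree : R) * H p.1 * Z p.2)
    {μ : σ →₀ ℕ} (hμ : μ ≠ 0) : G μ = H μ := by
  induction μ using WellFoundedLT.induction with
  | _ μ ih =>
  have hlower : ∀ p ∈ (antidiagonal μ).erase (μ, 0),
      (p.1.degree : R) * G p.1 * Z p.2 = (p.1.degree : R) * H p.1 * Z p.2 := by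
    intro p hp
    obtain ⟨hne, hsum⟩ : p ≠ (μ, 0) ∧ p.1 + p.2 = μ := by simpa using hp
    by_cases h0 : p.1 = 0
    · simp [h0]
    have hlt : p.1 < μ := lt_of_le_of_ne (hsum ▸ le_self_add) fun h =>
      hne (Prod.ext h (by simpa [h] using hsum))
    rw [ih p.1 hlt h0]
  have key := (hG μ hμ).symm.trans (hH μ hμ)
  rw [← Finset.add_sum_erase _ _ (by simp : (μ, 0) ∈ antidiagonal μ), ← Finset.add_sum_erase _ _
    (by simp : (μ, 0) ∈ antidiagonal μ), sum_congr rfl hlower, add_left_inj, hZ0, mul_one,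
    mul_one] at key
  have hunit : IsUnit (μ.degree : R) := by
    have hq : (μ.degree : ℚ) ≠ 0 := Nat.cast_ne_zero.2 ((degree_eq_zero_iff μ).not.2 hμ)
    simpa using hq.isUnit.map (algebraMap ℚ R)
  exact hunit.mul_left_cancel key

end ExpLog

theorem stmt_5_general {R : Type*} [CommRing R] [Algebra ℚ R] {σ : Type*}
    (F Z : (σ →₀ ℕ) → R)
    (hZ : ∀ μ : σ →₀ ℕ,
      Z μ = ∑ᶠ Λ ∈ {Λ : Multiset (σ →₀ ℕ) | Λ.sum = μ ∧ (0 : σ →₀ ℕ) ∉ Λ},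
        algebraMap ℚ R (1 / lmovAut Λ) * (Λ.map F).prod) :
    ∀ μ : σ →₀ ℕ, μ ≠ 0 →
      F μ = ∑ᶠ Λ ∈ {Λ : Multiset (σ →₀ ℕ) | Λ.sum = μ ∧ (0 : σ →₀ ℕ) ∉ Λ},
        algebraMap ℚ R (lmovTheta Λ) * (Λ.map Z).prod := by
  classical
  intro μ hμ
  obtain rfl : Z = partitionExp F :=
    funext fun ν => (hZ ν).trans (Finsupp.finsum_mem_eq_sum_vectorPartitions _ ν)
  rw [Finsupp.finsum_mem_eq_sum_vectorPartitions]
  exact eq_of_degree_mul_eq_sum_antidiagonal (partitionExp_zero F)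
    (fun ν _ => degree_mul_partitionExp F ν)
    (fun ν hν => degree_mul_eq_sum_antidiagonal_partitionLog _ (partitionExp_zero F) hν) hμ

/-- Exponential/logarithm inversion between the partition function and the free
energy: if `Z(μ) = ∑_{Λ ⊢ μ} (∏_{ν ∈ Λ} F ν)/|Aut Λ|` (sum over all finite multisets
of nonzero elements of `σ →₀ ℕ` with sum `μ`) and `F 0 = 0`, then for every `μ ≠ 0`
one has `F(μ) = ∑_{Λ ⊢ μ} θ(Λ) ∏_{ν ∈ Λ} Z(ν)`. -/
theorem stmt_5 {R : Type*} [CommRing R] [Algebra ℚ R] {σ : Type*}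
    (F Z : (σ →₀ ℕ) → R) (hF : F 0 = 0)
    (hZ : ∀ μ : σ →₀ ℕ,
      Z μ = ∑ᶠ Λ ∈ {Λ : Multiset (σ →₀ ℕ) | Λ.sum = μ ∧ (0 : σ →₀ ℕ) ∉ Λ},
        algebraMap ℚ R (1 / lmovAut Λ) * (Λ.map F).prod) :
    ∀ μ : σ →₀ ℕ, μ ≠ 0 →
      F μ = ∑ᶠ Λ ∈ {Λ : Multiset (σ →₀ ℕ) | Λ.sum = μ ∧ (0 : σ →₀ ℕ) ∉ Λ},
        algebraMap ℚ R (lmovTheta Λ) * (Λ.map Z).prod :=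
  stmt_5_general F Z hZ
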